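/- arXiv:2403.00536 — 2 statements merged into one kernel-verified Lean document; each statement's English description precedes it below -/
import Mathlib

section
/- Let I be a finite set of items with sizes a_i > 0 and profits p_i ≥ 0, let C > 0, and suppose ∑_{i∈I} a_i ≤ C. Let 0 < δ < 1 and let a_max = max_i a_i. Then there exists a subset I' ⊆ I with ∑_{i∈I'} a_i ≤ (1-δ)C + a_max and ∑_{i∈I'} p_i ≥ (1-δ) ∑_{i∈I} p_i. -/
/-!
Repeatedly discard an item of below-average profit density `p i / a i` while the total size
exceeds `(1 - δ) C + a_max`. Discarding such an item never lowers the average density, and the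
process stops with total size still above `(1 - δ) C ≥ (1 - δ) ∑ a`, so the remaining items keep
at least a `(1 - δ)`-fraction of the profit. This is the greedy form of the vertex argument for
the fractional knapsack LP.
-/

open Finset

namespace Finset

variable {ι : Type*} (a p : ι → ℝ)

theorem exists_mul_sum_le_mul_sum (I : Finset ι) (hne : I.Nonempty) :
    ∃ i ∈ I, p i * ∑ j ∈ I, a j ≤ a i * ∑ j ∈ I, p j :=
  exists_le_of_sum_le hne (by rw [← sum_mul, ← sum_mul, mul_comm])

theorem sum_mul_sum_erase_le [DecidableEq ι] {I : Finset ι} {i : ι} (hi : i ∈ I)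
    (hdens : p i * ∑ j ∈ I, a j ≤ a i * ∑ j ∈ I, p j) :
    (∑ j ∈ I, p j) * ∑ j ∈ I.erase i, a j ≤ (∑ j ∈ I.erase i, p j) * ∑ j ∈ I, a j := by
  rw [← add_sum_erase I a hi, ← add_sum_erase I p hi] at hdens ⊢
  linarith

theorem exists_subset_sum_le_add_and_density_ge [DecidableEq ι] (I : Finset ι) {B m : ℝ}
    (hB : 0 ≤ B) (hm₀ : 0 ≤ m) (ha : ∀ i ∈ I, 0 ≤ a i) (hm : ∀ i ∈ I, a i ≤ m) :
    ∃ J ⊆ I, ∑ j ∈ J, a j ≤ B + m ∧ min B (∑ i ∈ I, a i) ≤ ∑ j ∈ J, a j ∧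
      (∑ i ∈ I, p i) * ∑ j ∈ J, a j ≤ (∑ j ∈ J, p j) * ∑ i ∈ I, a i := by
  induction I using Finset.strongInduction with
  | H I ih =>
  rcases le_or_gt (∑ i ∈ I, a i) (B + m) with hsmall | hlarge
  · exact ⟨I, subset_rfl, hsmall, min_le_right _ _, le_rfl⟩
  have hne : I.Nonempty := nonempty_of_sum_ne_zero (f := a) (by linarith)
  obtain ⟨i, hi, hdens⟩ := exists_mul_sum_le_mul_sum a p I hne
  obtain ⟨J, hJ, hJa, hJmin, hJp⟩ := ih (I.erase i) (erase_ssubset hi)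
    (fun j hj => ha j (mem_of_mem_erase hj)) (fun j hj => hm j (mem_of_mem_erase hj))
  have hrest : B < ∑ j ∈ I.erase i, a j := by
    linarith [add_sum_erase I a hi, hm i hi]
  have hJ_nonneg : 0 ≤ ∑ j ∈ J, a j := sum_nonneg fun j hj => ha j (mem_of_mem_erase (hJ hj))
  have hI_nonneg : 0 ≤ ∑ j ∈ I, a j := sum_nonneg ha
  refine ⟨J, hJ.trans (erase_subset i I), hJa, (min_le_left _ _).trans ?_, ?_⟩
  · rwa [min_eq_left hrest.le] at hJmin
  · refine le_of_mul_le_mul_right ?_ (hB.trans_lt hrest)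
    calc (∑ j ∈ I, p j) * (∑ j ∈ J, a j) * (∑ j ∈ I.erase i, a j)
        = ((∑ j ∈ I, p j) * ∑ j ∈ I.erase i, a j) * ∑ j ∈ J, a j := by ring
      _ ≤ ((∑ j ∈ I.erase i, p j) * ∑ j ∈ I, a j) * ∑ j ∈ J, a j :=
          mul_le_mul_of_nonneg_right (sum_mul_sum_erase_le a p hi hdens) hJ_nonneg
      _ = ((∑ j ∈ I.erase i, p j) * ∑ j ∈ J, a j) * ∑ j ∈ I, a j := by ring
      _ ≤ ((∑ j ∈ J, p j) * ∑ j ∈ I.erase i, a j) * ∑ j ∈ I, a j :=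
          mul_le_mul_of_nonneg_right hJp hI_nonneg
      _ = (∑ j ∈ J, p j) * (∑ j ∈ I, a j) * (∑ j ∈ I.erase i, a j) := by ring

end Finset

theorem stmt_6_general {ι : Type*} [DecidableEq ι] (I : Finset ι) (hne : I.Nonempty)
    (a p : ι → ℝ) (ha : ∀ i ∈ I, 0 < a i) (hp : ∀ i ∈ I, 0 ≤ p i)
    (C : ℝ) (hcap : ∑ i ∈ I, a i ≤ C)
    (δ : ℝ) (hδ : 0 < δ) (hδ' : δ < 1) :
    ∃ I' ⊆ I, (∑ i ∈ I', a i ≤ (1 - δ) * C + I.sup' hne a) ∧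
      (1 - δ) * ∑ i ∈ I, p i ≤ ∑ i ∈ I', p i := by
  have hA : 0 < ∑ i ∈ I, a i := sum_pos ha hne
  obtain ⟨J, hJ, hJa, hJmin, hJp⟩ := exists_subset_sum_le_add_and_density_ge a p I
    (B := (1 - δ) * C) (m := I.sup' hne a) (mul_nonneg (by linarith) (hA.le.trans hcap))
    (hne.elim fun i hi => le_sup'_of_le a hi (ha i hi).le)
    (fun i hi => (ha i hi).le) (fun i hi => le_sup' a hi)
  refine ⟨J, hJ, hJa, le_of_mul_le_mul_right ?_ hA⟩
  have hscaled : (1 - δ) * ∑ i ∈ I, a i ≤ ∑ j ∈ J, a j :=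
    (le_min (mul_le_mul_of_nonneg_left hcap (by linarith))
      (mul_le_of_le_one_left hA.le (by linarith))).trans hJmin
  calc (1 - δ) * (∑ i ∈ I, p i) * ∑ i ∈ I, a i
      = ((1 - δ) * ∑ i ∈ I, a i) * ∑ i ∈ I, p i := by ring
    _ ≤ (∑ j ∈ J, a j) * ∑ i ∈ I, p i := mul_le_mul_of_nonneg_right hscaled (sum_nonneg hp)
    _ ≤ (∑ j ∈ J, p j) * ∑ i ∈ I, a i := by linarith

/-- Scaling the knapsack capacity by `(1-δ)` loses at most a `δ`-fraction of the
profit, up to one extra item of maximal size. -/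
theorem stmt_6 {ι : Type*} [DecidableEq ι] (I : Finset ι) (hne : I.Nonempty)
    (a p : ι → ℝ) (ha : ∀ i ∈ I, 0 < a i) (hp : ∀ i ∈ I, 0 ≤ p i)
    (C : ℝ) (hC : 0 < C) (hcap : ∑ i ∈ I, a i ≤ C)
    (δ : ℝ) (hδ : 0 < δ) (hδ' : δ < 1) :
    ∃ I' ⊆ I, (∑ i ∈ I', a i ≤ (1 - δ) * C + I.sup' hne a) ∧
      (1 - δ) * ∑ i ∈ I, p i ≤ ∑ i ∈ I', p i :=
  stmt_6_general I hne a p ha hp C hcap δ hδ hδ'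
end

section
/- Let B be a d-dimensional box with side lengths ℓ_1,...,ℓ_d and let I be a set of hypercube items with side lengths s_i such that s_i ≤ ε · min_{d'} ℓ_{d'} for all i ∈ I, where 0 < ε < 1/2^(d+2), and suppose the items of I can be packed disjointly into B. Then there exists I' ⊆ I with p(I') ≥ (1 - (2d+1)ε)(1+ε)^(-d) · p(I) and ∑_{i∈I'} ⌈s_i⌉_{1+ε}^d ≤ VOL_d(B) - 2dε · VOL_d(B). -/
noncomputable def ceilPow (ε x : ℝ) : ℝ := (1 + ε) ^ ⌈Real.logb (1 + ε) x⌉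

/-!
Let `c i = ⌈s i⌉_{1+ε} ^ d ≤ (1 + ε) ^ d * s i ^ d` and `θ = (1 - (2d+1)ε)(1+ε)^(-d)`, so that
`θ * ∑ c ≤ (1 - (2d+1)ε) VOL(B)`, the capacity `(1 - 2dε) VOL(B)` minus `ε VOL(B)`. Choose items
greedily by decreasing profit density `p i / c i` up to the capacity. If the first rejected item
has `c ≤ ε VOL(B)` (always the case for `d ≥ 2`, as `c i ≤ ((1 + ε) ε) ^ d VOL(B)`), the chosen
items have total `c` at least `θ * ∑ c`, hence, having the highest densities, profit at least
`θ p(I)`. For `d = 1` an item with `c > ε VOL(B)` is a power of `1 + ε` in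
`(ε VOL(B), (1 + ε) ε VOL(B)]`, so all such items are equal and at most three of them are
rejected; the density surplus of the chosen prefix pays for them, and the leftover capacity is
refilled greedily with the rejected small items.
-/

open Finset

section CeilPow

variable {ε x : ℝ}

lemma ceilPow_pos (hε : 0 < ε) : 0 < ceilPow ε x :=
  zpow_pos (by linarith) _

lemma ceilPow_le (hε : 0 < ε) (hx : 0 < x) : ceilPow ε x ≤ (1 + ε) * x := by
  have hb : 1 < 1 + ε := by linarith
  calc ceilPow ε x = (1 + ε) ^ (⌈Real.logb (1 + ε) x⌉ : ℝ) := (Real.rpow_intCast _ _).symm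
    _ ≤ (1 + ε) ^ (Real.logb (1 + ε) x + 1) :=
        Real.rpow_le_rpow_of_exponent_le hb.le (Int.ceil_lt_add_one _).le
    _ = (1 + ε) * x := by
        rw [Real.rpow_add (by linarith), Real.rpow_logb (by linarith) hb.ne' hx, Real.rpow_one,
          mul_comm]

lemma ceilPow_pow_le (hε : 0 < ε) (hx : 0 < x) (d : ℕ) :
    ceilPow ε x ^ d ≤ (1 + ε) ^ d * x ^ d := by
  rw [← mul_pow]
  exact pow_le_pow_left₀ (ceilPow_pos hε).le (ceilPow_le hε hx) d

lemma zpow_eq_zpow_of_mem_Ioc {b y : ℝ} (hb : 1 < b) {a n : ℤ}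
    (ha : b ^ a ∈ Set.Ioc y (b * y)) (hn : b ^ n ∈ Set.Ioc y (b * y)) : b ^ a = b ^ n := by
  have hle : ∀ a n : ℤ, y < b ^ a → b ^ n ≤ b * y → n ≤ a := fun a n ha hn => by
    have : b ^ (n - 1) < b ^ a := by
      rw [zpow_sub_one₀ (by positivity)]
      exact lt_of_le_of_lt ((div_le_iff₀' (by positivity)).2 hn) ha
    have := (zpow_lt_zpow_iff_right₀ hb).1 this
    omega
  rw [le_antisymm (hle a n ha.1 hn.2) (hle n a hn.1 ha.2)]

lemma ceilPow_eq_ceilPow {x' y : ℝ} (hε : 0 < ε) (hx : ceilPow ε x ∈ Set.Ioc y ((1 + ε) * y))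
    (hx' : ceilPow ε x' ∈ Set.Ioc y ((1 + ε) * y)) : ceilPow ε x = ceilPow ε x' :=
  zpow_eq_zpow_of_mem_Ioc (by linarith) hx hx'

end CeilPow

section Knapsack

variable {ι : Type*}

theorem Finset.exists_greedy_split {α β : Type*} [LinearOrder α] [AddCommMonoid β]
    [LinearOrder β] [IsOrderedAddMonoid β] [DecidableEq ι] (X : Finset ι) (f : ι → α)
    (c : ι → β) {t : β} (ht : 0 ≤ t) (hX : t < ∑ i ∈ X, c i) :
    ∃ L ⊆ X, ∃ w ∈ X \ L, ∑ i ∈ L, c i ≤ t ∧ t < ∑ i ∈ L, c i + c w ∧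
      (∀ i ∈ L, f w ≤ f i) ∧ ∀ j ∈ X \ L, f j ≤ f w := by
  induction X using Finset.induction_on_min_value f with
  | empty => exact absurd hX (by simpa using ht)
  | insert a s has hmin ih =>
    by_cases hs : t < ∑ i ∈ s, c i
    · obtain ⟨L, hLs, w, hw, hL, hLw, hLf, hsf⟩ := ih hs
      refine ⟨L, hLs.trans (subset_insert a s), w, ?_, hL, hLw, hLf, ?_⟩
      · exact sdiff_subset_sdiff (subset_insert a s) subset_rfl hw
      · intro j hj
        rw [insert_sdiff_of_notMem _ (fun h => has (hLs h)), mem_insert] at hj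
        rcases hj with rfl | hj
        · exact hmin w (sdiff_subset hw)
        · exact hsf j hj
    · refine ⟨s, subset_insert a s, a, by simp [has], not_lt.1 hs, ?_, hmin, ?_⟩
      · rwa [sum_insert has, add_comm] at hX
      · intro j hj
        obtain rfl : j = a := by simpa [has] using hj
        exact le_rfl

lemma exchange_two_thresholds {θ ρ ρ' cP cL cG cR pP pL pG pR : ℝ} (hρ' : 0 ≤ ρ')
    (hρρ' : ρ' ≤ ρ) (hθ0 : 0 ≤ θ) (hθ1 : θ ≤ 1) (hP : ρ * cP ≤ pP) (hL : ρ' * cL ≤ pL)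
    (hG : pG ≤ ρ * cG) (hR : pR ≤ ρ' * cR) (hhigh : θ * cG ≤ (1 - θ) * cP)
    (hall : θ * (cG + cR) ≤ (1 - θ) * (cP + cL)) :
    θ * (pG + pR) ≤ (1 - θ) * (pP + pL) :=
  calc θ * (pG + pR) ≤ θ * (ρ * cG + ρ' * cR) := by gcongr
    _ = (ρ - ρ') * (θ * cG) + ρ' * (θ * (cG + cR)) := by ring
    _ ≤ (ρ - ρ') * ((1 - θ) * cP) + ρ' * ((1 - θ) * (cP + cL)) := by gcongr
    _ = (1 - θ) * (ρ * cP + ρ' * cL) := by ring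
    _ ≤ (1 - θ) * (pP + pL) := by gcongr

lemma exists_subset_of_two_thresholds [DecidableEq ι] (P G S : Finset ι) (c p : ι → ℝ)
    {ρ θ t : ℝ} (hρ : 0 ≤ ρ) (hθ0 : 0 ≤ θ) (hθ1 : θ ≤ 1) (ht : 0 ≤ t)
    (hcS : ∀ j ∈ S, 0 < c j) (hpS : ∀ j ∈ S, 0 ≤ p j)
    (hP : ∀ i ∈ P, ρ * c i ≤ p i) (hG : ∀ j ∈ G, p j ≤ ρ * c j) (hS : ∀ j ∈ S, p j ≤ ρ * c j)
    (hhigh : θ * ∑ j ∈ G, c j ≤ (1 - θ) * ∑ i ∈ P, c i)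
    (hsmall : ∀ w ∈ S, θ * (∑ i ∈ P, c i + ∑ j ∈ G, c j + ∑ j ∈ S, c j) ≤
      ∑ i ∈ P, c i + t - c w) :
    ∃ L ⊆ S, ∑ i ∈ L, c i ≤ t ∧
      θ * (∑ i ∈ P, p i + ∑ j ∈ G, p j + ∑ j ∈ S, p j) ≤ ∑ i ∈ P, p i + ∑ i ∈ L, p i := by
  have hPsum : ρ * ∑ i ∈ P, c i ≤ ∑ i ∈ P, p i := by
    rw [mul_sum]; exact sum_le_sum hP
  have hGsum : ∑ j ∈ G, p j ≤ ρ * ∑ j ∈ G, c j := by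
    rw [mul_sum]; exact sum_le_sum hG
  by_cases hfit : ∑ j ∈ S, c j ≤ t
  · have hcS0 : 0 ≤ ∑ j ∈ S, c j := sum_nonneg fun j hj => (hcS j hj).le
    have := exchange_two_thresholds (cL := ∑ j ∈ S, c j) (pL := ∑ j ∈ S, p j) (cR := 0)
      (pR := 0) le_rfl hρ hθ0 hθ1 hPsum (by rw [zero_mul]; exact sum_nonneg hpS) hGsum
      (mul_zero 0).ge hhigh
      (by rw [add_zero, mul_add]; linarith [mul_nonneg (sub_nonneg.2 hθ1) hcS0])
    exact ⟨S, subset_rfl, hfit, by linarith⟩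
  obtain ⟨L, hLS, w, hw, hLt, htw, hLdens, hRdens⟩ :=
    S.exists_greedy_split (fun j => p j / c j) c ht (not_le.1 hfit)
  have hwS := (mem_sdiff.1 hw).1
  set ρ' := p w / c w
  have hLsum : ρ' * ∑ i ∈ L, c i ≤ ∑ i ∈ L, p i := by
    rw [mul_sum]
    exact sum_le_sum fun i hi => (le_div_iff₀ (hcS i (hLS hi))).1 (hLdens i hi)
  have hRsum : ∑ j ∈ S \ L, p j ≤ ρ' * ∑ j ∈ S \ L, c j := by
    rw [mul_sum]
    exact sum_le_sum fun j hj => (div_le_iff₀ (hcS j (mem_sdiff.1 hj).1)).1 (hRdens j hj)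
  have hcSplit := sum_sdiff hLS (f := c)
  have hmass : θ * (∑ j ∈ G, c j + ∑ j ∈ S \ L, c j) ≤
      (1 - θ) * (∑ i ∈ P, c i + ∑ i ∈ L, c i) := by
    linear_combination hsmall w hwS + htw + θ * hcSplit
  have := exchange_two_thresholds (div_nonneg (hpS w hwS) (hcS w hwS).le)
    ((div_le_iff₀ (hcS w hwS)).2 (hS w hwS)) hθ0 hθ1 hPsum hLsum hGsum hRsum hhigh hmass
  exact ⟨L, hLS, hLt, by linear_combination this - θ * sum_sdiff hLS (f := p)⟩

lemma sum_le_mul_of_eq_const_of_lt (G : Finset ι) (c : ι → ℝ) {β : ℝ} (n : ℕ) (hβ : 0 < β)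
    (hG : ∀ j ∈ G, c j = β) (hlt : ∑ j ∈ G, c j < (n + 1) * β) : ∑ j ∈ G, c j ≤ n * β := by
  rw [sum_congr rfl hG, sum_const, nsmul_eq_mul] at hlt ⊢
  have : (#G : ℝ) < n + 1 := lt_of_mul_lt_mul_right hlt hβ.le
  gcongr
  exact_mod_cast Nat.lt_succ_iff.1 (by exact_mod_cast this)

theorem exists_knapsack_subset [DecidableEq ι] (I : Finset ι) (c p : ι → ℝ) {θ m T : ℝ}
    (hc : ∀ i ∈ I, 0 < c i) (hp : ∀ i ∈ I, 0 ≤ p i) (hθ0 : 0 ≤ θ) (hθ1 : θ ≤ 1) (hm : 0 ≤ m)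
    (hmass : θ * ∑ i ∈ I, c i ≤ T - m)
    (hbig : ∀ i ∈ I, m < c i → ∑ j ∈ I, c j ≤ T + 3 * m ∧
      (1 + 2 * θ) * c i ≤ (1 - θ) * T ∧ ∀ j ∈ I, m < c j → c j = c i) :
    ∃ J ⊆ I, θ * ∑ i ∈ I, p i ≤ ∑ i ∈ J, p i ∧ ∑ i ∈ J, c i ≤ T := by
  by_cases hfit : ∑ i ∈ I, c i ≤ T
  · exact ⟨I, subset_rfl, by nlinarith [sum_nonneg hp], hfit⟩
  have hT : 0 ≤ T := by nlinarith [sum_nonneg fun i hi => (hc i hi).le]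
  obtain ⟨P, hPI, o, ho, hPT, hTo, hPdens, hXdens⟩ :=
    I.exists_greedy_split (fun i => p i / c i) c hT (not_le.1 hfit)
  have hoI := (mem_sdiff.1 ho).1
  set G := (I \ P).filter (fun j => m < c j)
  set S := (I \ P).filter (fun j => ¬ m < c j)
  have hGX : G ⊆ I \ P := filter_subset _ _
  have hSX : S ⊆ I \ P := filter_subset _ _
  have hsplit (f : ι → ℝ) : ∑ i ∈ I, f i = ∑ i ∈ P, f i + ∑ j ∈ G, f j + ∑ j ∈ S, f j := by
    rw [add_assoc, sum_filter_add_sum_filter_not, add_comm, sum_sdiff hPI]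
  have hhigh : θ * ∑ j ∈ G, c j ≤ (1 - θ) * ∑ i ∈ P, c i := by
    rcases G.eq_empty_or_nonempty with hG | ⟨g, hg⟩
    · rw [hG, sum_empty, mul_zero]
      exact mul_nonneg (by linarith) (sum_nonneg fun i hi => (hc i (hPI hi)).le)
    obtain ⟨hgX, hgm⟩ := mem_filter.1 hg
    obtain ⟨hexc, hgT, hbig_eq⟩ := hbig g (mem_sdiff.1 hgX).1 hgm
    have hGg : ∀ j ∈ G, c j = c g := fun j hj =>
      hbig_eq j (sdiff_subset (hGX hj)) (mem_filter.1 hj).2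
    have hog : c o ≤ c g := by
      by_cases hom : m < c o
      · exact (hbig_eq o hoI hom).le
      · linarith [not_lt.1 hom]
    have hG3 : ∑ j ∈ G, c j ≤ 3 * c g := by
      refine sum_le_mul_of_eq_const_of_lt G c 3 (by linarith) hGg ?_
      rw [hsplit c] at hexc
      have : 0 ≤ ∑ j ∈ S, c j := sum_nonneg fun j hj => (hc j (sdiff_subset (hSX hj))).le
      push_cast
      linarith
    calc θ * ∑ j ∈ G, c j ≤ θ * (3 * c g) := by gcongr
      _ ≤ (1 - θ) * (T - c g) := by linarith
      _ ≤ (1 - θ) * ∑ i ∈ P, c i := by gcongr; linarith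
  obtain ⟨L, hLS, hLt, hprofit⟩ := exists_subset_of_two_thresholds P G S c p
    (t := T - ∑ i ∈ P, c i) (div_nonneg (hp o hoI) (hc o hoI).le) hθ0 hθ1 (by linarith)
    (fun j hj => hc j (sdiff_subset (hSX hj))) (fun j hj => hp j (sdiff_subset (hSX hj)))
    (fun i hi => (le_div_iff₀ (hc i (hPI hi))).1 (hPdens i hi))
    (fun j hj => (div_le_iff₀ (hc j (sdiff_subset (hGX hj)))).1 (hXdens j (hGX hj)))
    (fun j hj => (div_le_iff₀ (hc j (sdiff_subset (hSX hj)))).1 (hXdens j (hSX hj)))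
    hhigh (fun w hw => by
      have : c w ≤ m := not_lt.1 (mem_filter.1 hw).2
      rw [← hsplit c]; linarith)
  have hPL : Disjoint P L := disjoint_sdiff.mono_right (hLS.trans hSX)
  refine ⟨P ∪ L, union_subset hPI (hLS.trans (hSX.trans sdiff_subset)), ?_, ?_⟩
  · rw [sum_union hPL, hsplit p]; exact hprofit
  · rw [sum_union hPL]; linarith

end Knapsack

section Rounding

variable {d : ℕ} {ε : ℝ}

lemma two_mul_add_one_mul_lt_half (hε : 0 < ε) (hε' : ε < 1 / 2 ^ (d + 2)) :
    (2 * d + 1) * ε < 1 / 2 := by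
  have hd : (2 * d + 1 : ℝ) ≤ 2 ^ (d + 1) := by
    have := Nat.lt_two_pow_self (n := d)
    exact_mod_cast (show 2 * d + 1 ≤ 2 ^ (d + 1) by rw [pow_succ]; omega)
  calc (2 * d + 1) * ε ≤ 2 ^ (d + 1) * ε := by gcongr
    _ < 2 ^ (d + 1) * (1 / 2 ^ (d + 2)) := by gcongr
    _ = 1 / 2 := by rw [pow_succ _ (d + 1)]; field_simp

lemma eq_one_of_lt_one_add_mul_pow (hd : 1 ≤ d) (hε : 0 < ε) (hε' : ε < 1 / 2 ^ (d + 2))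
    (h : ε < ((1 + ε) * ε) ^ d) : d = 1 := by
  by_contra hne
  have hε16 : ε < 1 / 16 := hε'.trans_le <| by
    rw [one_div_le_one_div (by positivity) (by norm_num)]
    exact le_trans (by norm_num : (16 : ℝ) ≤ 2 ^ 4)
      (pow_le_pow_right₀ (by norm_num : (1 : ℝ) ≤ 2) (by omega))
  have hq : (1 + ε) * ε ≤ 1 := by nlinarith
  have : ((1 + ε) * ε) ^ d ≤ ε := calc
    ((1 + ε) * ε) ^ d ≤ ((1 + ε) * ε) ^ 2 := pow_le_pow_of_le_one (by positivity) hq (by omega)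
    _ = (1 + ε) ^ 2 * ε * ε := by ring
    _ ≤ 1 * ε := by gcongr; nlinarith
    _ = ε := one_mul ε
  linarith

lemma sum_ceilPow_pow_le {ι : Type*} (I : Finset ι) {s : ι → ℝ} {V : ℝ} (hε : 0 < ε)
    (hs : ∀ i ∈ I, 0 < s i) (hvol : ∑ i ∈ I, s i ^ d ≤ V) :
    ∑ i ∈ I, ceilPow ε (s i) ^ d ≤ (1 + ε) ^ d * V :=
  calc ∑ i ∈ I, ceilPow ε (s i) ^ d ≤ ∑ i ∈ I, (1 + ε) ^ d * s i ^ d :=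
        sum_le_sum fun i hi => ceilPow_pow_le hε (hs i hi) d
    _ ≤ (1 + ε) ^ d * V := by rw [← mul_sum]; gcongr

lemma ceilPow_pow_le_mul_prod {x : ℝ} (ℓ : Fin d → ℝ) (hε : 0 < ε) (hx : 0 < x)
    (hxℓ : ∀ j, x ≤ ε * ℓ j) : ceilPow ε x ^ d ≤ ((1 + ε) * ε) ^ d * ∏ j, ℓ j :=
  calc ceilPow ε x ^ d ≤ (1 + ε) ^ d * ∏ _j : Fin d, x := by
        simpa using ceilPow_pow_le hε hx d
    _ ≤ (1 + ε) ^ d * ∏ j, ε * ℓ j := by gcongr with j; exact hxℓ j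
    _ = ((1 + ε) * ε) ^ d * ∏ j, ℓ j := by simp [prod_mul_distrib, mul_pow, mul_assoc]

lemma one_add_two_mul_le_one_sub_mul (hε : 0 < ε) (hε8 : ε < 1 / 8) {θ V x : ℝ} (hV : 0 < V)
    (hθ : θ * (1 + ε) = 1 - 3 * ε) (hx : x ≤ (1 + ε) * ε * V) :
    (1 + 2 * θ) * x ≤ (1 - θ) * (V - 2 * ε * V) := by
  refine le_of_mul_le_mul_right ?_ (by linarith : 0 < 1 + ε)
  calc (1 + 2 * θ) * x * (1 + ε) = (3 - 5 * ε) * x := by linear_combination 2 * x * hθ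
    _ ≤ (3 - 5 * ε) * ((1 + ε) * ε * V) := by gcongr; linarith
    _ ≤ 4 * ε * (V - 2 * ε * V) := by
        nlinarith [mul_nonneg (mul_pos hε hV).le (mul_nonneg (by linarith : 0 ≤ 1 - ε)
          (by linarith : 0 ≤ 1 - 5 * ε))]
    _ = (1 - θ) * (V - 2 * ε * V) * (1 + ε) := by linear_combination (V - 2 * ε * V) * hθ

end Rounding

/-- Selection of items for an S-box: if all hypercube items packed in a box `B` are
small compared with `B`, a subset of almost all the profit can be chosen whose
rounded volume is at most `(1 - 2dε)·VOL(B)`. -/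
theorem stmt_7 {ι : Type*} (d : ℕ) (hd : 1 ≤ d) (ε : ℝ) (hε : 0 < ε)
    (hε' : ε < 1 / 2 ^ (d + 2)) (ℓ : Fin d → ℝ) (hℓ : ∀ j, 0 < ℓ j)
    (I : Finset ι) (s p : ι → ℝ)
    (hs : ∀ i ∈ I, 0 < s i) (hp : ∀ i ∈ I, 0 ≤ p i)
    (hsmall : ∀ i ∈ I, ∀ j, s i ≤ ε * ℓ j)
    (hvol : ∑ i ∈ I, (s i) ^ d ≤ ∏ j, ℓ j) :
    ∃ I' ⊆ I,
      (1 - (2 * d + 1) * ε) * (1 + ε) ^ (-(d : ℤ)) * (∑ i ∈ I, p i)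
        ≤ ∑ i ∈ I', p i ∧
      ∑ i ∈ I', (ceilPow ε (s i)) ^ d
        ≤ (∏ j, ℓ j) - 2 * d * ε * (∏ j, ℓ j) := by
  classical
  set V := ∏ j, ℓ j
  set θ := (1 - (2 * d + 1) * ε) * (1 + ε) ^ (-(d : ℤ)) with hθ_def
  have hV : 0 < V := prod_pos fun j _ => hℓ j
  have hθ : θ * (1 + ε) ^ d = 1 - (2 * d + 1) * ε := by
    rw [hθ_def, zpow_neg, zpow_natCast, mul_assoc, inv_mul_cancel₀ (by positivity), mul_one]
  have hθ0 : 0 ≤ θ :=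
    mul_nonneg (by linarith [two_mul_add_one_mul_lt_half hε hε']) (by positivity)
  have hθ1 : θ ≤ 1 := by nlinarith [one_le_pow₀ (by linarith : 1 ≤ 1 + ε) (n := d)]
  have hA := sum_ceilPow_pow_le I hε hs hvol
  have hcV i (hi : i ∈ I) := ceilPow_pow_le_mul_prod ℓ hε (hs i hi) (hsmall i hi)
  have hd1 : ∀ i ∈ I, ε * V < ceilPow ε (s i) ^ d → d = 1 := fun i hi hbig =>
    eq_one_of_lt_one_add_mul_pow hd hε hε'
      (lt_of_mul_lt_mul_right (hbig.trans_le (hcV i hi)) hV.le)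
  refine exists_knapsack_subset I _ p (fun i _ => pow_pos (ceilPow_pos hε) d) hp hθ0 hθ1
    (m := ε * V) (by positivity) ?_ ?_
  · calc θ * ∑ i ∈ I, ceilPow ε (s i) ^ d ≤ θ * ((1 + ε) ^ d * V) := by gcongr
      _ = V - 2 * d * ε * V - ε * V := by rw [← mul_assoc, hθ]; ring
  intro i hi hbig
  obtain rfl := hd1 i hi hbig
  simp only [pow_one, Nat.cast_one, mul_one] at hA hθ hcV hbig ⊢
  refine ⟨by linarith, one_add_two_mul_le_one_sub_mul hε (by norm_num at hε'; linarith) hV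
    (by linarith) (hcV i hi), fun j hj hj' => ?_⟩
  exact ceilPow_eq_ceilPow hε ⟨hj', (hcV j hj).trans_eq (mul_assoc _ _ _)⟩
    ⟨hbig, (hcV i hi).trans_eq (mul_assoc _ _ _)⟩
end
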